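/- arXiv:2405.14104 — 3 statements merged into one kernel-verified Lean document; each statement's English description precedes it below -/
import Mathlib

section
/- Suppose the latent distribution Q satisfies instrument exogeneity and generalized monotonicity, Q rationalizes P (i.e., P = Q∘T^{-1}), and P{Z = z} > 0 for every z ∈ 𝒵. Then for every d ∈ 𝒟 and z ∈ 𝒵, the instrument value z maximally encourages d (i.e., Q{D_z ≠ d and D_{z'} = d for some z' ∈ 𝒵} = 0) if and only if P{D = d | Z = z} ≥ P{D = d | Z = z'} for all z' ∈ 𝒵. -/
open Finset

/-- A probability mass function on a finite type. -/
structure ProbMass (α : Type) [Fintype α] where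
  mass : α → ℝ
  nonneg : ∀ a, 0 ≤ mass a
  total : ∑ a, mass a = 1

/-- Probability of an event under a probability mass function. -/
noncomputable def pr {α : Type} [Fintype α] (Q : ProbMass α) (A : Set α) : ℝ :=
  ∑ a, A.indicator Q.mass a

/-- Expectation of a real-valued function under a probability mass function. -/
noncomputable def expect {α : Type} [Fintype α] (Q : ProbMass α) (f : α → ℝ) : ℝ :=
  ∑ a, Q.mass a * f a

/-- The latent space: potential outcomes `(Y_d)_{d ∈ D}` taking values in the finite set
`𝒴 ⊂ ℝ`, potential treatments `(D_z)_{z ∈ Z}`, and the instrument `Z`. -/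
abbrev Latent (𝒴 : Finset ℝ) (D Z : Type) : Type := (D → ↥𝒴) × (Z → D) × Z

/-- The observed space: `(Y, D, Z)`. -/
abbrev Obs (𝒴 : Finset ℝ) (D Z : Type) : Type := ↥𝒴 × D × Z

variable {𝒴 : Finset ℝ} {D Z : Type} [Fintype D] [DecidableEq D] [Fintype Z] [DecidableEq Z]

/-- The map `T` sending `((y_d), (d_z), z)` to `(y_{d_z}, d_z, z)`. -/
def Tmap (ω : Latent 𝒴 D Z) : Obs 𝒴 D Z := (ω.1 (ω.2.1 ω.2.2), ω.2.1 ω.2.2, ω.2.2)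

/-- `Q` rationalizes `P`: `P = Q ∘ T⁻¹`. -/
def Rationalizes (Q : ProbMass (Latent 𝒴 D Z)) (P : ProbMass (Obs 𝒴 D Z)) : Prop :=
  ∀ o : Obs 𝒴 D Z, P.mass o = pr Q {ω | Tmap ω = o}

/-- Instrument exogeneity: `((Y_d), (D_z))` is independent of `Z` under `Q`. -/
def Exog (Q : ProbMass (Latent 𝒴 D Z)) : Prop :=
  ∀ (yd : D → ↥𝒴) (dz : Z → D) (z : Z),
    pr Q {ω | ω.1 = yd ∧ ω.2.1 = dz ∧ ω.2.2 = z}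
      = pr Q {ω | ω.1 = yd ∧ ω.2.1 = dz} * pr Q {ω | ω.2.2 = z}

/-- `zs` maximally encourages treatment `d` under `Q`:
`Q{D_{zs} ≠ d and D_{z'} = d for some z'} = 0`. -/
def MaxEnc (Q : ProbMass (Latent 𝒴 D Z)) (d : D) (zs : Z) : Prop :=
  pr Q {ω | ω.2.1 zs ≠ d ∧ ∃ z' : Z, ω.2.1 z' = d} = 0

/-- Generalized monotonicity. -/
def GenMono (Q : ProbMass (Latent 𝒴 D Z)) : Prop :=
  ∀ d : D, ∃ zs : Z, MaxEnc Q d zs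

/-- `θ(Q) = (E_Q[Y_d])_{d ∈ D}`, the vector of average potential outcomes. -/
noncomputable def theta (Q : ProbMass (Latent 𝒴 D Z)) : D → ℝ :=
  fun d => expect Q fun ω => (ω.1 d : ℝ)

/-- `𝐐₀(P, 𝐐)`: the set of `Q ∈ 𝐐` that rationalize `P`. -/
def Q0 (P : ProbMass (Obs 𝒴 D Z)) (QQ : Set (ProbMass (Latent 𝒴 D Z))) :
    Set (ProbMass (Latent 𝒴 D Z)) :=
  {Q | Q ∈ QQ ∧ Rationalizes Q P}

/-- `Θ₀(P, 𝐐)`: the identified set for `θ(Q)`. -/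
noncomputable def Theta0 (P : ProbMass (Obs 𝒴 D Z))
    (QQ : Set (ProbMass (Latent 𝒴 D Z))) : Set (D → ℝ) :=
  theta '' Q0 P QQ

/-- Unrestricted potential outcomes: if `Q ∈ 𝐐`, `Q'` is exogenous, and the potential
treatments have the same distribution under `Q'` as under `Q`, then `Q' ∈ 𝐐`. -/
def UnrestrictedPO (QQ : Set (ProbMass (Latent 𝒴 D Z))) : Prop :=
  ∀ Q ∈ QQ, ∀ Q' : ProbMass (Latent 𝒴 D Z), Exog Q' →
    (∀ dz : Z → D, pr Q' {ω | ω.2.1 = dz} = pr Q {ω | ω.2.1 = dz}) → Q' ∈ QQ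

/-- `P{Z = z}`. -/
noncomputable def prZ (P : ProbMass (Obs 𝒴 D Z)) (z : Z) : ℝ :=
  pr P {o | o.2.2 = z}

/-- `P{D = d ∣ Z = z}`. -/
noncomputable def condD (P : ProbMass (Obs 𝒴 D Z)) (d : D) (z : Z) : ℝ :=
  pr P {o | o.2.1 = d ∧ o.2.2 = z} / prZ P z

/-- `p_{yd|z} = P{Y = y, D = d ∣ Z = z}`. -/
noncomputable def pObs (P : ProbMass (Obs 𝒴 D Z)) (y : ℝ) (d : D) (z : Z) : ℝ :=
  pr P {o | (o.1 : ℝ) = y ∧ o.2.1 = d ∧ o.2.2 = z} / prZ P z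

/-- `β_{d|z} = E_P[Y · 1{D = d} ∣ Z = z]`. -/
noncomputable def betaObs (P : ProbMass (Obs 𝒴 D Z)) (d : D) (z : Z) : ℝ :=
  (expect P fun o => if o.2.1 = d ∧ o.2.2 = z then (o.1 : ℝ) else 0) / prZ P z

section MyAux

lemma my_pr_eq {α : Type} [Fintype α] (Q : ProbMass α) (A : Set α) [DecidablePred (· ∈ A)] :
    pr Q A = ∑ a, if a ∈ A then Q.mass a else 0 := by
  unfold pr
  apply Finset.sum_congr rfl
  intro a _
  rw [Set.indicator_apply]

lemma my_pr_nonneg {α : Type} [Fintype α] (Q : ProbMass α) (A : Set α) : 0 ≤ pr Q A :=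
  Finset.sum_nonneg fun a _ => Set.indicator_nonneg (fun b _ => Q.nonneg b) a

lemma my_pr_mono {α : Type} [Fintype α] (Q : ProbMass α) {A B : Set α} (h : A ⊆ B) :
    pr Q A ≤ pr Q B := by
  classical
  rw [my_pr_eq, my_pr_eq]
  apply Finset.sum_le_sum
  intro a _
  by_cases hA : a ∈ A
  · simp [hA, h hA]
  · simp only [hA, if_false]
    split
    · exact Q.nonneg a
    · exact le_refl 0

lemma my_pr_split {α : Type} [Fintype α] (Q : ProbMass α) (A : Set α) (C : α → Prop) :
    pr Q A = pr Q {a | a ∈ A ∧ C a} + pr Q {a | a ∈ A ∧ ¬ C a} := by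
  classical
  rw [my_pr_eq, my_pr_eq, my_pr_eq, ← Finset.sum_add_distrib]
  apply Finset.sum_congr rfl
  intro a _
  by_cases hA : a ∈ A <;> by_cases hC : C a <;> simp [hA, hC, Set.mem_setOf_eq]

end MyAux
section MyAux2
open scoped Classical

variable {𝒴 : Finset ℝ} {D Z : Type} [Fintype D] [DecidableEq D] [Fintype Z] [DecidableEq Z]

lemma my_pr_push {Q : ProbMass (Latent 𝒴 D Z)} {P : ProbMass (Obs 𝒴 D Z)}
    (hR : Rationalizes Q P) (S : Set (Obs 𝒴 D Z)) :
    pr P S = pr Q (Tmap ⁻¹' S) := by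
  classical
  rw [my_pr_eq, my_pr_eq]
  have h : P.mass = fun o => pr Q {ω | Tmap ω = o} := funext hR
  rw [h]
  calc ∑ o, (if o ∈ S then pr Q {ω | Tmap ω = o} else 0)
      = ∑ o, ∑ ω, (if Tmap ω = o then (if o ∈ S then Q.mass ω else 0) else 0) := by
        apply Finset.sum_congr rfl; intro o _
        by_cases hS : o ∈ S
        · simp only [hS, if_true]
          rw [my_pr_eq]
          apply Finset.sum_congr rfl; intro ω _
          simp [Set.mem_setOf_eq]
        · simp [hS]
    _ = ∑ ω, ∑ o, (if Tmap ω = o then (if o ∈ S then Q.mass ω else 0) else 0) :=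
        Finset.sum_comm
    _ = ∑ ω, (if Tmap ω ∈ S then Q.mass ω else 0) := by
        apply Finset.sum_congr rfl; intro ω _
        rw [Finset.sum_ite_eq Finset.univ (Tmap ω) (fun o => if o ∈ S then Q.mass ω else 0)]
        simp
    _ = ∑ ω, (if ω ∈ Tmap ⁻¹' S then Q.mass ω else 0) := rfl

lemma my_pr_singleton (Q : ProbMass (Latent 𝒴 D Z)) (yd : D → ↥𝒴) (dz : Z → D) (z : Z) :
    pr Q {ω | ω.1 = yd ∧ ω.2.1 = dz ∧ ω.2.2 = z} = Q.mass (yd, dz, z) := by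
  classical
  rw [my_pr_eq, Finset.sum_eq_single ((yd, dz, z) : Latent 𝒴 D Z)]
  · simp
  · intro b _ hb
    rw [if_neg]
    rintro ⟨h1, h2, h3⟩
    exact hb (Prod.ext h1 (Prod.ext h2 h3))
  · intro h; exact absurd (Finset.mem_univ _) h

lemma my_pr_pair (Q : ProbMass (Latent 𝒴 D Z)) (yd : D → ↥𝒴) (dz : Z → D) :
    pr Q {ω | ω.1 = yd ∧ ω.2.1 = dz} = ∑ z', Q.mass (yd, dz, z') := by
  classical
  rw [my_pr_eq]
  simp only [Fintype.sum_prod_type, Set.mem_setOf_eq]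
  rw [Finset.sum_eq_single yd]
  · rw [Finset.sum_eq_single dz]
    · simp
    · intro b _ hb; simp [hb]
    · intro h; exact absurd (Finset.mem_univ _) h
  · intro a _ ha
    simp [ha]
  · intro h; exact absurd (Finset.mem_univ _) h

lemma my_pr_latent (Q : ProbMass (Latent 𝒴 D Z)) (C : (D → ↥𝒴) → (Z → D) → Prop) :
    pr Q {ω | C ω.1 ω.2.1} = ∑ yd, ∑ dz, (if C yd dz then ∑ z', Q.mass (yd, dz, z') else 0) := by
  classical
  rw [my_pr_eq]
  simp only [Fintype.sum_prod_type, Set.mem_setOf_eq]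
  apply Finset.sum_congr rfl; intro yd _
  apply Finset.sum_congr rfl; intro dz _
  by_cases hC : C yd dz <;> simp [hC]

lemma my_pr_latent_z (Q : ProbMass (Latent 𝒴 D Z)) (C : (D → ↥𝒴) → (Z → D) → Prop) (z : Z) :
    pr Q {ω | C ω.1 ω.2.1 ∧ ω.2.2 = z}
      = ∑ yd, ∑ dz, (if C yd dz then Q.mass (yd, dz, z) else 0) := by
  classical
  rw [my_pr_eq]
  simp only [Fintype.sum_prod_type, Set.mem_setOf_eq]
  apply Finset.sum_congr rfl; intro yd _
  apply Finset.sum_congr rfl; intro dz _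
  by_cases hC : C yd dz
  · simp only [hC, true_and, Set.mem_setOf_eq]
    rw [Finset.sum_eq_single z]
    · simp
    · intro b _ hb; simp [hb]
    · intro h; exact absurd (Finset.mem_univ _) h
  · simp [hC, Set.mem_setOf_eq]

lemma my_exog_factor {Q : ProbMass (Latent 𝒴 D Z)} (hE : Exog Q)
    (C : (D → ↥𝒴) → (Z → D) → Prop) (z : Z) :
    pr Q {ω | C ω.1 ω.2.1 ∧ ω.2.2 = z}
      = pr Q {ω | C ω.1 ω.2.1} * pr Q {ω | ω.2.2 = z} := by
  classical
  rw [my_pr_latent_z, my_pr_latent, Finset.sum_mul]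
  apply Finset.sum_congr rfl; intro yd _
  rw [Finset.sum_mul]
  apply Finset.sum_congr rfl; intro dz _
  rw [ite_mul, zero_mul]
  by_cases hC : C yd dz
  · simp only [hC, if_true]
    have := hE yd dz z
    rw [my_pr_singleton, my_pr_pair] at this
    exact this
  · simp [hC]

end MyAux2
section MyAux3

variable {𝒴 : Finset ℝ} {D Z : Type} [Fintype D] [DecidableEq D] [Fintype Z] [DecidableEq Z]

lemma my_prZ_eq {Q : ProbMass (Latent 𝒴 D Z)} {P : ProbMass (Obs 𝒴 D Z)}
    (hR : Rationalizes Q P) (z : Z) : prZ P z = pr Q {ω | ω.2.2 = z} := by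
  unfold prZ
  rw [my_pr_push hR]
  rfl

lemma my_condD_eq {Q : ProbMass (Latent 𝒴 D Z)} {P : ProbMass (Obs 𝒴 D Z)}
    (hE : Exog Q) (hR : Rationalizes Q P) (hP : ∀ z : Z, 0 < prZ P z) (d : D) (z : Z) :
    condD P d z = pr Q {ω | ω.2.1 z = d} := by
  have hz : prZ P z = pr Q {ω | ω.2.2 = z} := my_prZ_eq hR z
  have hq : pr Q {ω | ω.2.2 = z} ≠ 0 := by rw [← hz]; exact (hP z).ne'
  have hnum : pr P {o | o.2.1 = d ∧ o.2.2 = z} = pr Q {ω | ω.2.1 z = d ∧ ω.2.2 = z} := by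
    rw [my_pr_push hR]
    congr 1
    ext ω
    simp only [Set.mem_preimage, Set.mem_setOf_eq, Tmap]
    constructor
    · rintro ⟨h1, h2⟩; subst h2; exact ⟨h1, rfl⟩
    · rintro ⟨h1, h2⟩; subst h2; exact ⟨h1, rfl⟩
  have hfac := my_exog_factor hE (fun _ dz => dz z = d) z
  beta_reduce at hfac
  unfold condD
  rw [hnum, hz, hfac, mul_div_assoc, div_self hq, mul_one]

end MyAux3
/-- Lemma 2.1: under instrument exogeneity and generalized monotonicity,
`z` maximally encourages `d` iff `z` maximizes `z ↦ P{D = d ∣ Z = z}`. -/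
theorem maxEnc_iff_maximizer
    (𝒴 : Finset ℝ) (h𝒴 : 2 ≤ 𝒴.card)
    (D Z : Type) [Fintype D] [DecidableEq D] [Nontrivial D]
    [Fintype Z] [DecidableEq Z] [Nontrivial Z]
    (Q : ProbMass (Latent 𝒴 D Z)) (P : ProbMass (Obs 𝒴 D Z))
    (hE : Exog Q) (hM : GenMono Q) (hR : Rationalizes Q P)
    (hP : ∀ z : Z, 0 < prZ P z) :
    ∀ (d : D) (z : Z), MaxEnc Q d z ↔ ∀ z' : Z, condD P d z' ≤ condD P d z := by
  intro d z
  have key : ∀ w : Z, condD P d w = pr Q {ω : Latent 𝒴 D Z | ω.2.1 w = d} :=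
    fun w => my_condD_eq hE hR hP d w
  constructor
  · intro hMz z'
    rw [key, key]
    have split := my_pr_split Q {ω : Latent 𝒴 D Z | ω.2.1 z' = d} (fun ω => ω.2.1 z = d)
    have h1 : pr Q {a : Latent 𝒴 D Z | a ∈ {ω : Latent 𝒴 D Z | ω.2.1 z' = d} ∧ a.2.1 z = d}
        ≤ pr Q {ω : Latent 𝒴 D Z | ω.2.1 z = d} := by
      apply my_pr_mono
      rintro a ⟨_, h⟩
      exact h
    have h2 : pr Q {a : Latent 𝒴 D Z | a ∈ {ω : Latent 𝒴 D Z | ω.2.1 z' = d} ∧ ¬ a.2.1 z = d}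
        = 0 := by
      refine le_antisymm ?_ (my_pr_nonneg Q _)
      rw [← hMz]
      apply my_pr_mono
      rintro a ⟨h1, h2⟩
      exact ⟨h2, z', h1⟩
    linarith [split]
  · intro hmax
    obtain ⟨zs, hzs⟩ := hM d
    set E : Set (Latent 𝒴 D Z) := {ω | ∃ z', ω.2.1 z' = d} with hE'
    have sE_zs := my_pr_split Q E (fun ω => ω.2.1 zs = d)
    have e1 : pr Q {a : Latent 𝒴 D Z | a ∈ E ∧ a.2.1 zs = d}
        = pr Q {ω : Latent 𝒴 D Z | ω.2.1 zs = d} := by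
      congr 1
      ext a
      simp only [hE', Set.mem_setOf_eq]
      exact ⟨fun h => h.2, fun h => ⟨⟨zs, h⟩, h⟩⟩
    have e2 : pr Q {a : Latent 𝒴 D Z | a ∈ E ∧ ¬ a.2.1 zs = d} = 0 := by
      rw [show {a : Latent 𝒴 D Z | a ∈ E ∧ ¬ a.2.1 zs = d}
          = {ω : Latent 𝒴 D Z | ω.2.1 zs ≠ d ∧ ∃ z', ω.2.1 z' = d} from by
        ext a; simp only [hE', Set.mem_setOf_eq, Ne]; exact and_comm]
      exact hzs
    have sE_z := my_pr_split Q E (fun ω => ω.2.1 z = d)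
    have f1 : pr Q {a : Latent 𝒴 D Z | a ∈ E ∧ a.2.1 z = d}
        = pr Q {ω : Latent 𝒴 D Z | ω.2.1 z = d} := by
      congr 1
      ext a
      simp only [hE', Set.mem_setOf_eq]
      exact ⟨fun h => h.2, fun h => ⟨⟨z, h⟩, h⟩⟩
    have hle : pr Q {ω : Latent 𝒴 D Z | ω.2.1 zs = d}
        ≤ pr Q {ω : Latent 𝒴 D Z | ω.2.1 z = d} := by
      rw [← key, ← key]; exact hmax zs
    have hzero : pr Q {a : Latent 𝒴 D Z | a ∈ E ∧ ¬ a.2.1 z = d} = 0 := by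
      have hnn := my_pr_nonneg Q {a : Latent 𝒴 D Z | a ∈ E ∧ ¬ a.2.1 z = d}
      linarith
    unfold MaxEnc
    rw [show {ω : Latent 𝒴 D Z | ω.2.1 z ≠ d ∧ ∃ z', ω.2.1 z' = d}
        = {a : Latent 𝒴 D Z | a ∈ E ∧ ¬ a.2.1 z = d} from by
      ext a; simp only [hE', Set.mem_setOf_eq, Ne]; exact and_comm]
    exact hzero
end

section
/- Suppose every Q ∈ 𝐐 satisfies instrument exogeneity and generalized monotonicity, and 𝐐 satisfies unrestricted potential outcomes. Then for any observed distribution P with P{Z = z} > 0 for all z ∈ 𝒵 and 𝐐₀(P, 𝐐) ≠ ∅, one has Θ₀(P, 𝐐) = Θ₀(P, 𝐐*_{E,M}) = Θ₀(P, 𝐐*_E). -/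
open Finset

variable {𝒴 : Finset ℝ} {D Z : Type} [Fintype D] [DecidableEq D] [Fintype Z] [DecidableEq Z]

/-!
Only `Θ₀(P, 𝐐*_E) ⊆ Θ₀(P, 𝐐)` needs an argument. Under exogeneity, `P` determines the moments
`E_Q[g(Y_d) 1{D_z = d}]` for every `z` with `P{Z = z} > 0`. Fix `Q₀ ∈ 𝐐₀(P, 𝐐)` with monotonicity
instruments `z*(d)` and an exogenous `Q` rationalizing `P`, and splice them: draw `Z` from `P`,
independently `(D_z)` from `Q₀`, and then the `Y_d` independently, `Y_d` from `Q₀` given `(D_z)`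
when `D_{z*(d)} = d` and otherwise from the law of `Y_d` under `Q` on `{D_{z*(d)} ≠ d}`.
The spliced law lies in `𝐐` by unrestricted potential outcomes. It rationalizes `P` because
`Q₀`-almost surely `D_z = d` forces `D_{z*(d)} = d`, so all identified moments come from `Q₀`.
Its mean of `Y_d` is `E_{Q₀}[Y_d; D_{z*(d)} = d] + Q₀{D_{z*(d)} ≠ d} · E_Q[Y_d | D_{z*(d)} ≠ d]`;
both `Q₀`-terms are identified moments at `z*(d)`, so they may be replaced by their `Q`-versions,
and the sum becomes `E_Q[Y_d]`.
-/

namespace ProbMass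

variable {α β : Type} [Fintype α] [Fintype β]

theorem pr_eq_expect_indicator (R : ProbMass α) (A : Set α) :
    pr R A = expect R (A.indicator 1) := by
  unfold pr _root_.expect
  refine Finset.sum_congr rfl fun a _ => ?_
  by_cases ha : a ∈ A <;> simp [ha]

theorem expect_const (R : ProbMass α) (c : ℝ) : expect R (fun _ => c) = c := by
  simp [_root_.expect, ← Finset.sum_mul, R.total]

theorem mass_eq_expect_ite [DecidableEq α] (R : ProbMass α) (a : α) :
    R.mass a = expect R (fun x => if x = a then 1 else 0) := by
  simp [_root_.expect]

theorem pr_nonneg (R : ProbMass α) (A : Set α) : 0 ≤ pr R A :=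
  Finset.sum_nonneg fun a _ => Set.indicator_nonneg (fun a _ => R.nonneg a) a

theorem mass_eq_zero_of_pr_eq_zero {R : ProbMass α} {A : Set α} (h : pr R A = 0) {a : α}
    (ha : a ∈ A) : R.mass a = 0 := by
  have := (Finset.sum_eq_zero_iff_of_nonneg fun a _ =>
    Set.indicator_nonneg (fun a _ => R.nonneg a) a).mp h a (Finset.mem_univ a)
  rwa [Set.indicator_of_mem ha] at this

theorem expect_indicator_eq_zero {R : ProbMass α} {A : Set α} (h : pr R A = 0) (f : α → ℝ) :
    expect R (A.indicator f) = 0 := by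
  refine Finset.sum_eq_zero fun a _ => ?_
  by_cases ha : a ∈ A
  · rw [mass_eq_zero_of_pr_eq_zero h ha, zero_mul]
  · rw [Set.indicator_of_notMem ha, mul_zero]

theorem pr_mono {R : ProbMass α} {A B : Set α} (hAB : A ⊆ B) : pr R A ≤ pr R B :=
  Finset.sum_le_sum fun a _ => Set.indicator_le_indicator_of_subset hAB (fun a => R.nonneg a) a

theorem expect_indicator_add_compl (R : ProbMass α) (A : Set α) (f : α → ℝ) :
    expect R (A.indicator f) + expect R (Aᶜ.indicator f) = expect R f := by
  simp only [_root_.expect, ← Finset.sum_add_distrib, ← mul_add,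
    Set.indicator_self_add_compl_apply]

theorem pr_compl (R : ProbMass α) (A : Set α) : pr R Aᶜ = 1 - pr R A := by
  have h := expect_indicator_add_compl R A 1
  rw [← pr_eq_expect_indicator, ← pr_eq_expect_indicator] at h
  linarith [h.trans (expect_const R 1)]

theorem expect_indicator_eq_sum_fiber (R : ProbMass α) (f : α → β) (p : β → Prop)
    [DecidablePred p] (g : α → ℝ) :
    expect R ({a | p (f a)}.indicator g) =
      ∑ b ∈ Finset.univ.filter p, expect R ({a | f a = b}.indicator g) := by
  classical
  unfold _root_.expect
  rw [Finset.sum_comm]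
  refine Finset.sum_congr rfl fun a _ => ?_
  simp [Set.indicator_apply]

noncomputable def map (R : ProbMass α) (f : α → β) : ProbMass β where
  mass b := pr R {a | f a = b}
  nonneg _ := pr_nonneg R _
  total := by
    classical
    simp only [pr, Set.indicator_apply, Set.mem_ofPred_eq]
    rw [Finset.sum_comm]
    simp [R.total]

theorem sum_map_mass_filter (R : ProbMass α) (f : α → β) (p : β → Prop) [DecidablePred p] :
    ∑ b ∈ Finset.univ.filter p, (R.map f).mass b = pr R {a | p (f a)} := by
  rw [pr_eq_expect_indicator, expect_indicator_eq_sum_fiber R f p]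
  exact Finset.sum_congr rfl fun b _ => pr_eq_expect_indicator R _

theorem expect_map (R : ProbMass α) (f : α → β) (g : β → ℝ) :
    expect (R.map f) g = expect R (g ∘ f) := by
  classical
  simp only [_root_.expect, map, pr, Set.indicator_apply, Set.mem_ofPred_eq, Finset.sum_mul]
  rw [Finset.sum_comm]
  simp

/-- Conditioning on an `R`-null event returns `R` itself, so `cond` is always a law. -/
noncomputable def cond (R : ProbMass α) (A : Set α) : ProbMass α where
  mass a := if pr R A = 0 then R.mass a else A.indicator R.mass a / pr R A
  nonneg a := by
    split
    · exact R.nonneg a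
    · exact div_nonneg (Set.indicator_nonneg (fun a _ => R.nonneg a) a) (pr_nonneg R A)
  total := by
    by_cases h : pr R A = 0
    · simp [h, R.total]
    · simp only [h, if_false, ← Finset.sum_div]
      exact div_self h

theorem pr_mul_expect_cond (R : ProbMass α) (A : Set α) (g : α → ℝ) :
    pr R A * expect (R.cond A) g = expect R (A.indicator g) := by
  by_cases h : pr R A = 0
  · rw [h, zero_mul, expect_indicator_eq_zero h]
  · simp only [_root_.expect, cond, h, if_false, Finset.mul_sum]
    refine Finset.sum_congr rfl fun a _ => ?_
    by_cases ha : a ∈ A <;> field_simp <;> simp [ha]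

noncomputable def pi {ι : Type} [Fintype ι] [DecidableEq ι] (R : ι → ProbMass β) :
    ProbMass (ι → β) where
  mass x := ∏ i, (R i).mass (x i)
  nonneg _ := Finset.prod_nonneg fun i _ => (R i).nonneg _
  total := by simp [← Fintype.prod_sum, ProbMass.total]

theorem expect_pi_eval {ι : Type} [Fintype ι] [DecidableEq ι] (R : ι → ProbMass β) (i : ι)
    (g : β → ℝ) : expect (pi R) (fun x => g (x i)) = expect (R i) g := by
  have hterm (x : ι → β) : (pi R).mass x * g (x i) =
      ∏ j, (R j).mass (x j) * (if j = i then g (x j) else 1) := by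
    rw [Finset.prod_mul_distrib, Finset.prod_ite_eq', if_pos (Finset.mem_univ i)]
    rfl
  have hsum (j : ι) : ∑ b, (R j).mass b * (if j = i then g b else 1) =
      if j = i then expect (R i) g else 1 := by
    split_ifs with hj
    · subst hj; rfl
    · simp [ProbMass.total]
  rw [_root_.expect, Finset.sum_congr rfl fun x _ => hterm x,
    ← Fintype.prod_sum fun j (b : β) => (R j).mass b * if j = i then g b else 1]
  simp only [hsum, Finset.prod_ite_eq', Finset.mem_univ, if_true]

variable {γ : Type} [Fintype γ]

theorem pr_eq_mass (R : ProbMass (α × β × γ)) (a : α) (b : β) (c : γ) :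
    pr R {x | x.1 = a ∧ x.2.1 = b ∧ x.2.2 = c} = R.mass (a, b, c) := by
  classical
  simp [pr, Set.indicator_apply, Fintype.sum_prod_type, ite_and]

theorem pr_fst_eq_snd_fst_eq (R : ProbMass (α × β × γ)) (a : α) (b : β) :
    pr R {x | x.1 = a ∧ x.2.1 = b} = ∑ c, R.mass (a, b, c) := by
  classical
  simp [pr, Set.indicator_apply, Fintype.sum_prod_type, ite_and]
  rw [Finset.sum_comm]
  simp

theorem pr_snd_snd_eq (R : ProbMass (α × β × γ)) (c : γ) :
    pr R {x | x.2.2 = c} = ∑ a, ∑ b, R.mass (a, b, c) := by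
  classical
  simp [pr, Set.indicator_apply, Fintype.sum_prod_type]

end ProbMass

theorem exog_of_mass_eq_mul {Q : ProbMass (Latent 𝒴 D Z)} (f : (D → ↥𝒴) → (Z → D) → ℝ)
    (g : Z → ℝ) (h : ∀ yd dz z, Q.mass (yd, dz, z) = f yd dz * g z) : Exog Q := by
  have htotal : (∑ yd, ∑ dz, f yd dz) * ∑ z, g z = 1 := by
    rw [← Q.total]
    simp only [Fintype.sum_prod_type, h, ← Finset.mul_sum, ← Finset.sum_mul]
  intro yd dz z
  rw [ProbMass.pr_eq_mass, ProbMass.pr_fst_eq_snd_fst_eq, ProbMass.pr_snd_snd_eq]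
  simp only [h, ← Finset.mul_sum, ← Finset.sum_mul]
  linear_combination -(f yd dz * g z) * htotal

theorem Exog.expect_indicator_instrument {Q : ProbMass (Latent 𝒴 D Z)} (hE : Exog Q) (z : Z)
    (h : (D → ↥𝒴) → (Z → D) → ℝ) :
    expect Q ({ω | ω.2.2 = z}.indicator fun ω => h ω.1 ω.2.1) =
      expect Q (fun ω => h ω.1 ω.2.1) * pr Q {ω | ω.2.2 = z} := by
  have hmass (yd : D → ↥𝒴) (dz : Z → D) :
      Q.mass (yd, dz, z) = (∑ z', Q.mass (yd, dz, z')) * pr Q {ω | ω.2.2 = z} := by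
    rw [← ProbMass.pr_fst_eq_snd_fst_eq, ← ProbMass.pr_eq_mass]
    exact hE yd dz z
  simp only [_root_.expect, Fintype.sum_prod_type, Set.indicator_apply, Set.mem_ofPred_eq,
    mul_ite, mul_zero, Finset.sum_ite_eq', Finset.mem_univ, if_true, Finset.sum_mul]
  refine Finset.sum_congr rfl fun yd _ => Finset.sum_congr rfl fun dz _ => ?_
  rw [hmass, Finset.sum_mul, Finset.sum_mul]
  exact Finset.sum_congr rfl fun _ _ => by ring

theorem Rationalizes.expect_eq {Q : ProbMass (Latent 𝒴 D Z)} {P : ProbMass (Obs 𝒴 D Z)}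
    (hR : Rationalizes Q P) (h : Obs 𝒴 D Z → ℝ) : expect P h = expect Q (h ∘ Tmap) := by
  rw [← ProbMass.expect_map]
  exact Finset.sum_congr rfl fun o _ => by rw [hR o]; rfl

theorem Rationalizes.pr_instrument_eq {Q : ProbMass (Latent 𝒴 D Z)} {P : ProbMass (Obs 𝒴 D Z)}
    (hR : Rationalizes Q P) (z : Z) : pr Q {ω | ω.2.2 = z} = prZ P z := by
  rw [prZ, ProbMass.pr_eq_expect_indicator, ProbMass.pr_eq_expect_indicator, hR.expect_eq]
  rfl

noncomputable def treatedMoment (Q : ProbMass (Latent 𝒴 D Z)) (z : Z) (d : D) (g : ↥𝒴 → ℝ) : ℝ :=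
  expect Q ({ω | ω.2.1 z = d}.indicator fun ω => g (ω.1 d))

theorem Exog.expect_obs_comp_Tmap {Q : ProbMass (Latent 𝒴 D Z)} (hE : Exog Q) (d : D) (z : Z)
    (g : ↥𝒴 → ℝ) :
    expect Q ((fun o : Obs 𝒴 D Z => if o.2.1 = d ∧ o.2.2 = z then g o.1 else 0) ∘ Tmap) =
      treatedMoment Q z d g * pr Q {ω | ω.2.2 = z} := by
  have hfun : ((fun o : Obs 𝒴 D Z => if o.2.1 = d ∧ o.2.2 = z then g o.1 else 0) ∘ Tmap) =
      {ω | ω.2.2 = z}.indicator fun ω => if ω.2.1 z = d then g (ω.1 d) else 0 := by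
    funext ⟨yd, dz, z'⟩
    by_cases hz : z' = z
    · subst hz
      by_cases hd : dz z' = d
      · subst hd; simp [Tmap]
      · simp [Tmap, hd]
    · simp [Tmap, hz]
  rw [hfun, hE.expect_indicator_instrument z fun yd dz => if dz z = d then g (yd d) else 0]
  congr 2
  funext ω
  simp [Set.indicator_apply]

theorem treatedMoment_eq_of_rationalizes {Q₁ Q₂ : ProbMass (Latent 𝒴 D Z)}
    {P : ProbMass (Obs 𝒴 D Z)} (hE₁ : Exog Q₁) (hR₁ : Rationalizes Q₁ P) (hE₂ : Exog Q₂)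
    (hR₂ : Rationalizes Q₂ P) {z : Z} (hz : prZ P z ≠ 0) (d : D) (g : ↥𝒴 → ℝ) :
    treatedMoment Q₁ z d g = treatedMoment Q₂ z d g := by
  have h₁ := hE₁.expect_obs_comp_Tmap d z g
  have h₂ := hE₂.expect_obs_comp_Tmap d z g
  rw [← hR₁.expect_eq, hR₁.pr_instrument_eq] at h₁
  rw [← hR₂.expect_eq, hR₂.pr_instrument_eq] at h₂
  exact mul_right_cancel₀ hz (h₁.symm.trans h₂)

theorem rationalizes_of_treatedMoment_eq {Q Q₀ : ProbMass (Latent 𝒴 D Z)}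
    {P : ProbMass (Obs 𝒴 D Z)} (hE : Exog Q) (hE₀ : Exog Q₀) (hR₀ : Rationalizes Q₀ P)
    (hZ : ∀ z, pr Q {ω | ω.2.2 = z} = prZ P z)
    (hM : ∀ z d g, treatedMoment Q z d g = treatedMoment Q₀ z d g) : Rationalizes Q P := by
  rintro ⟨y, d, z⟩
  have hind : (fun o : Obs 𝒴 D Z => if o = (y, d, z) then (1 : ℝ) else 0) =
      fun o => if o.2.1 = d ∧ o.2.2 = z then (if o.1 = y then 1 else 0) else 0 := by
    funext ⟨y', d', z'⟩
    simp only [Prod.mk.injEq, ite_and]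
    split_ifs <;> simp_all
  have hpr : pr Q {ω | Tmap ω = (y, d, z)} =
      expect Q ((fun o : Obs 𝒴 D Z => if o = (y, d, z) then (1 : ℝ) else 0) ∘ Tmap) := by
    rw [ProbMass.pr_eq_expect_indicator]
    congr 1
    funext ω
    simp [Set.indicator_apply]
  rw [hpr, ProbMass.mass_eq_expect_ite, hR₀.expect_eq, hind,
    hE.expect_obs_comp_Tmap d z fun y' => if y' = y then 1 else 0,
    hE₀.expect_obs_comp_Tmap d z fun y' => if y' = y then 1 else 0, hM, hZ, hR₀.pr_instrument_eq]

noncomputable def latentLaw (ρ : ProbMass Z) (μ : ProbMass (Z → D))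
    (ν : (Z → D) → D → ProbMass ↥𝒴) : ProbMass (Latent 𝒴 D Z) where
  mass ω := (ProbMass.pi (ν ω.2.1)).mass ω.1 * μ.mass ω.2.1 * ρ.mass ω.2.2
  nonneg ω := mul_nonneg (mul_nonneg ((ProbMass.pi _).nonneg _) (μ.nonneg _)) (ρ.nonneg _)
  total := by
    simp only [Fintype.sum_prod_type, ← Finset.mul_sum, ρ.total, mul_one]
    rw [Finset.sum_comm]
    simp only [← Finset.sum_mul, ProbMass.total, one_mul]

section LatentLaw
variable (ρ : ProbMass Z) (μ : ProbMass (Z → D)) (ν : (Z → D) → D → ProbMass ↥𝒴)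

theorem exog_latentLaw : Exog (latentLaw ρ μ ν) :=
  exog_of_mass_eq_mul (fun yd dz => (ProbMass.pi (ν dz)).mass yd * μ.mass dz) ρ.mass
    fun _ _ _ => rfl

theorem pr_instrument_latentLaw (z : Z) : pr (latentLaw ρ μ ν) {ω | ω.2.2 = z} = ρ.mass z := by
  rw [ProbMass.pr_snd_snd_eq]
  simp only [latentLaw, ← Finset.sum_mul]
  rw [Finset.sum_comm]
  simp only [← Finset.sum_mul, ProbMass.total, one_mul]

theorem expect_latentLaw (h : (D → ↥𝒴) → (Z → D) → ℝ) :
    expect (latentLaw ρ μ ν) (fun ω => h ω.1 ω.2.1) =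
      ∑ dz, μ.mass dz * expect (ProbMass.pi (ν dz)) fun yd => h yd dz := by
  simp only [_root_.expect, latentLaw, Fintype.sum_prod_type, Finset.mul_sum]
  rw [Finset.sum_comm]
  refine Finset.sum_congr rfl fun dz _ => Finset.sum_congr rfl fun yd _ => ?_
  rw [← Finset.sum_mul, ← Finset.mul_sum, ρ.total]
  ring

theorem pr_treatment_latentLaw (dz : Z → D) :
    pr (latentLaw ρ μ ν) {ω | ω.2.1 = dz} = μ.mass dz := by
  have h := expect_latentLaw ρ μ ν fun _ dz' => if dz' = dz then 1 else 0
  simp only [ProbMass.expect_const, mul_ite, mul_one, mul_zero, Finset.sum_ite_eq', Finset.mem_univ,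
    if_true] at h
  rw [ProbMass.pr_eq_expect_indicator, ← h]
  congr 1
  funext ω
  simp [Set.indicator_apply]

theorem treatedMoment_latentLaw (z : Z) (d : D) (g : ↥𝒴 → ℝ) :
    treatedMoment (latentLaw ρ μ ν) z d g =
      ∑ dz ∈ Finset.univ.filter (· z = d), μ.mass dz * expect (ν dz d) g := by
  have hfun : ({ω : Latent 𝒴 D Z | ω.2.1 z = d}.indicator fun ω => g (ω.1 d)) =
      fun ω => if ω.2.1 z = d then g (ω.1 d) else 0 := by
    funext ω
    simp [Set.indicator_apply]
  rw [treatedMoment, Finset.sum_filter, hfun,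
    expect_latentLaw ρ μ ν fun yd dz => if dz z = d then g (yd d) else 0]
  refine Finset.sum_congr rfl fun dz _ => ?_
  split_ifs with h
  · rw [ProbMass.expect_pi_eval]
  · rw [ProbMass.expect_const, mul_zero]

theorem theta_latentLaw (d : D) :
    theta (latentLaw ρ μ ν) d = ∑ dz, μ.mass dz * expect (ν dz d) (↑) := by
  simp only [← ProbMass.expect_pi_eval]
  exact expect_latentLaw ρ μ ν fun yd _ => (yd d : ℝ)

end LatentLaw

theorem pr_treatment_eq_zero_of_maxEnc {Q : ProbMass (Latent 𝒴 D Z)} {d : D} {zs : Z}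
    (hM : MaxEnc Q d zs) {dz : Z → D} {z : Z} (hz : dz z = d) (hzs : dz zs ≠ d) :
    pr Q {ω | ω.2.1 = dz} = 0 :=
  le_antisymm (hM ▸ ProbMass.pr_mono fun ω (hω : ω.2.1 = dz) => ⟨hω ▸ hzs, z, hω ▸ hz⟩)
    (ProbMass.pr_nonneg _ _)

section Splice
variable (P : ProbMass (Obs 𝒴 D Z)) (Q₀ Q : ProbMass (Latent 𝒴 D Z)) (zs : D → Z)

noncomputable def spliceOutcome (dz : Z → D) (d : D) : ProbMass ↥𝒴 :=
  if dz (zs d) = d then (Q₀.cond {ω | ω.2.1 = dz}).map (·.1 d)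
  else (Q.cond {ω | ω.2.1 (zs d) = d}ᶜ).map (·.1 d)

noncomputable def splice : ProbMass (Latent 𝒴 D Z) :=
  latentLaw (P.map (·.2.2)) (Q₀.map (·.2.1)) (spliceOutcome Q₀ Q zs)

theorem pr_mul_expect_spliceOutcome {dz : Z → D} {d : D} (h : dz (zs d) = d) (g : ↥𝒴 → ℝ) :
    pr Q₀ {ω | ω.2.1 = dz} * expect (spliceOutcome Q₀ Q zs dz d) g =
      expect Q₀ ({ω | ω.2.1 = dz}.indicator fun ω => g (ω.1 d)) := by
  rw [spliceOutcome, if_pos h, ProbMass.expect_map, ProbMass.pr_mul_expect_cond]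
  rfl

theorem treatedMoment_splice (hM : ∀ d, MaxEnc Q₀ d (zs d)) (z : Z) (d : D) (g : ↥𝒴 → ℝ) :
    treatedMoment (splice P Q₀ Q zs) z d g = treatedMoment Q₀ z d g := by
  rw [splice, treatedMoment_latentLaw, treatedMoment,
    ProbMass.expect_indicator_eq_sum_fiber Q₀ (·.2.1) (· z = d)]
  refine Finset.sum_congr rfl fun dz hdz => ?_
  by_cases hzs : dz (zs d) = d
  · exact pr_mul_expect_spliceOutcome Q₀ Q zs hzs g
  · have h0 := pr_treatment_eq_zero_of_maxEnc (hM d) (Finset.mem_filter.mp hdz).2 hzs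
    change pr Q₀ {ω | ω.2.1 = dz} * _ = _
    rw [h0, zero_mul, ProbMass.expect_indicator_eq_zero h0]

theorem rationalizes_splice (hE₀ : Exog Q₀) (hR₀ : Rationalizes Q₀ P)
    (hM : ∀ d, MaxEnc Q₀ d (zs d)) : Rationalizes (splice P Q₀ Q zs) P :=
  rationalizes_of_treatedMoment_eq (exog_latentLaw _ _ _) hE₀ hR₀
    (pr_instrument_latentLaw _ _ _) (treatedMoment_splice P Q₀ Q zs hM)

theorem theta_splice (hE₀ : Exog Q₀) (hR₀ : Rationalizes Q₀ P) (hE : Exog Q)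
    (hR : Rationalizes Q P) (hP : ∀ z, 0 < prZ P z) : theta (splice P Q₀ Q zs) = theta Q := by
  funext d
  set A : Set (Latent 𝒴 D Z) := {ω | ω.2.1 (zs d) = d}
  have hid (g : ↥𝒴 → ℝ) : treatedMoment Q₀ (zs d) d g = treatedMoment Q (zs d) d g :=
    treatedMoment_eq_of_rationalizes hE₀ hR₀ hE hR (hP (zs d)).ne' d g
  have hcompl : pr Q₀ Aᶜ = pr Q Aᶜ := by
    rw [ProbMass.pr_compl, ProbMass.pr_compl, ProbMass.pr_eq_expect_indicator,
      ProbMass.pr_eq_expect_indicator Q]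
    exact congrArg (1 - ·) (hid 1)
  have htaken : ∑ dz ∈ Finset.univ.filter (· (zs d) = d),
      (Q₀.map (·.2.1)).mass dz * expect (spliceOutcome Q₀ Q zs dz d) (↑) =
        expect Q (A.indicator fun ω => (ω.1 d : ℝ)) := by
    rw [← treatedMoment, ← hid, treatedMoment,
      ProbMass.expect_indicator_eq_sum_fiber Q₀ (·.2.1) (· (zs d) = d)]
    exact Finset.sum_congr rfl fun dz hdz =>
      pr_mul_expect_spliceOutcome Q₀ Q zs (Finset.mem_filter.mp hdz).2 _
  have huntaken : ∑ dz ∈ Finset.univ.filter (¬ · (zs d) = d),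
      (Q₀.map (·.2.1)).mass dz * expect (spliceOutcome Q₀ Q zs dz d) (↑) =
        expect Q (Aᶜ.indicator fun ω => (ω.1 d : ℝ)) := by
    rw [Finset.sum_congr rfl fun dz hdz => by
      rw [spliceOutcome, if_neg (Finset.mem_filter.mp hdz).2], ← Finset.sum_mul,
      ProbMass.sum_map_mass_filter Q₀ (·.2.1) (¬ · (zs d) = d),
      show pr Q₀ {ω | ¬ ω.2.1 (zs d) = d} = pr Q Aᶜ from hcompl, ProbMass.expect_map,
      ProbMass.pr_mul_expect_cond]
    rfl
  rw [splice, theta_latentLaw, ← Finset.sum_filter_add_sum_filter_not _ (· (zs d) = d), htaken,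
    huntaken, ProbMass.expect_indicator_add_compl]
  rfl

end Splice

theorem Theta0_exog_subset {QQ : Set (ProbMass (Latent 𝒴 D Z))} (hU : UnrestrictedPO QQ)
    {P : ProbMass (Obs 𝒴 D Z)} (hP : ∀ z, 0 < prZ P z) {Q₀ : ProbMass (Latent 𝒴 D Z)}
    (hQ₀ : Q₀ ∈ Q0 P QQ) (hE₀ : Exog Q₀) (hM₀ : GenMono Q₀) :
    Theta0 P {Q | Exog Q} ⊆ Theta0 P QQ := by
  choose zs hzs using hM₀
  rintro _ ⟨Q, ⟨hE, hR⟩, rfl⟩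
  refine ⟨splice P Q₀ Q zs, ⟨?_, rationalizes_splice P Q₀ Q zs hE₀ hQ₀.2 hzs⟩,
    theta_splice P Q₀ Q zs hE₀ hQ₀.2 hE hR hP⟩
  exact hU Q₀ hQ₀.1 _ (exog_latentLaw _ _ _) (pr_treatment_latentLaw _ _ _)

theorem no_identifying_power_general
    (𝒴 : Finset ℝ)
    (D Z : Type) [Fintype D] [DecidableEq D]
    [Fintype Z] [DecidableEq Z]
    (QQ : Set (ProbMass (Latent 𝒴 D Z)))
    (hsub : ∀ Q ∈ QQ, Exog Q ∧ GenMono Q)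
    (hU : UnrestrictedPO QQ)
    (P : ProbMass (Obs 𝒴 D Z))
    (hP : ∀ z : Z, 0 < prZ P z)
    (hne : (Q0 P QQ).Nonempty) :
    Theta0 P QQ = Theta0 P {Q | Exog Q ∧ GenMono Q} ∧
      Theta0 P {Q | Exog Q ∧ GenMono Q} = Theta0 P {Q | Exog Q} := by
  obtain ⟨Q₀, hQ₀⟩ := hne
  have h₁ : Theta0 P QQ ⊆ Theta0 P {Q | Exog Q ∧ GenMono Q} :=
    Set.image_mono fun Q hQ => ⟨hsub Q hQ.1, hQ.2⟩
  have h₂ : Theta0 P {Q | Exog Q ∧ GenMono Q} ⊆ Theta0 P {Q | Exog Q} :=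
    Set.image_mono fun Q hQ => ⟨hQ.1.1, hQ.2⟩
  have h₃ := Theta0_exog_subset hU hP hQ₀ (hsub Q₀ hQ₀.1).1 (hsub Q₀ hQ₀.1).2
  exact ⟨h₁.antisymm (h₂.trans h₃), h₂.antisymm (h₃.trans h₁)⟩

/-- Theorem 3.1: if every `Q ∈ 𝐐` satisfies instrument exogeneity and
generalized monotonicity and `𝐐` does not restrict potential outcomes, then for any `P`
consistent with `𝐐`, `Θ₀(P, 𝐐) = Θ₀(P, 𝐐*_{E,M}) = Θ₀(P, 𝐐*_E)`. -/
theorem no_identifying_power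
    (𝒴 : Finset ℝ) (h𝒴 : 2 ≤ 𝒴.card)
    (D Z : Type) [Fintype D] [DecidableEq D] [Nontrivial D]
    [Fintype Z] [DecidableEq Z] [Nontrivial Z]
    (QQ : Set (ProbMass (Latent 𝒴 D Z)))
    (hsub : ∀ Q ∈ QQ, Exog Q ∧ GenMono Q)
    (hU : UnrestrictedPO QQ)
    (P : ProbMass (Obs 𝒴 D Z))
    (hP : ∀ z : Z, 0 < prZ P z)
    (hne : (Q0 P QQ).Nonempty) :
    Theta0 P QQ = Theta0 P {Q | Exog Q ∧ GenMono Q} ∧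
      Theta0 P {Q | Exog Q ∧ GenMono Q} = Theta0 P {Q | Exog Q} :=
  no_identifying_power_general 𝒴 D Z QQ hsub hU P hP hne
end

section
/- Suppose the latent distribution Q satisfies instrument exogeneity and generalized monotonicity with maximally encouraging value z*(d) for each d ∈ 𝒟, Q rationalizes P (P = Q∘T^{-1}), and P{Z = z} > 0 for all z ∈ 𝒵. Then for each d ∈ 𝒟, E_Q[Y_d] lies in the closed interval [β_{d|z*(d)} + y^L(1 − Σ_{y∈𝒴} p_{yd|z*(d)}), β_{d|z*(d)} + y^U(1 − Σ_{y∈𝒴} p_{yd|z*(d)})]. -/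
open Finset

variable {𝒴 : Finset ℝ} {D Z : Type} [Fintype D] [DecidableEq D] [Fintype Z] [DecidableEq Z]

/-! Split `E_Q[Y_d]` on the event `D_z = d` with `z = z*(d)`. By exogeneity, restricting to
`Z = z` only rescales the law of `((Y_d), (D_z))` by `P{Z = z}`, and on `{Z = z, D_z = d}` the
observed outcome is `Y_d`; hence `E_Q[Y_d 1{D_z = d}] = β_{d|z}` and `Q{D_z = d} = Σ_y p_{yd|z}`.
The remaining part `E_Q[Y_d 1{D_z ≠ d}]` lies between `y^L` and `y^U` times `Q{D_z ≠ d}`. -/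

section Expectation

variable {α β : Type} [Fintype α] [Fintype β]

lemma pr_eq_sum_ite (Q : ProbMass α) (p : α → Prop) [DecidablePred p] :
    pr Q {a | p a} = ∑ a, if p a then Q.mass a else 0 :=
  Finset.sum_congr rfl fun a _ => by simp [Set.indicator_apply]

lemma pr_eq_expect (Q : ProbMass α) (p : α → Prop) [DecidablePred p] :
    pr Q {a | p a} = expect Q fun a => if p a then 1 else 0 := by
  simp [pr_eq_sum_ite, _root_.expect]

lemma pr_singleton (Q : ProbMass α) (a : α) : pr Q {a} = Q.mass a := by
  classical
  simp [pr, Set.indicator_apply]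

lemma expect_comp (Q : ProbMass α) (T : α → β) (g : β → ℝ) :
    expect Q (g ∘ T) = ∑ b, pr Q {a | T a = b} * g b := by
  classical
  simp only [_root_.expect, pr_eq_sum_ite, Finset.sum_mul, ite_mul, zero_mul, Function.comp_apply]
  rw [Finset.sum_comm]
  exact Finset.sum_congr rfl fun a _ => by rw [Finset.sum_ite_eq]; simp

lemma expect_eq_expect_comp {Q : ProbMass α} {P : ProbMass β} {T : α → β}
    (hT : ∀ b, P.mass b = pr Q {a | T a = b}) (g : β → ℝ) :
    expect P g = expect Q (g ∘ T) := by
  rw [expect_comp]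
  exact Finset.sum_congr rfl fun b _ => by rw [hT]

lemma sum_pr_eq_and_eq_pr (Q : ProbMass α) {s : Finset ℝ} {g : α → ℝ} (hg : ∀ a, g a ∈ s)
    (p : α → Prop) : ∑ y ∈ s, pr Q {a | g a = y ∧ p a} = pr Q {a | p a} := by
  classical
  simp only [pr_eq_sum_ite]
  rw [Finset.sum_comm]
  refine Finset.sum_congr rfl fun a _ => ?_
  simp only [ite_and]
  rw [Finset.sum_ite_eq, if_pos (hg a)]

/-- Manski's worst-case bound. -/
lemma expect_mem_Icc_of_mem_Icc (Q : ProbMass α) (p : α → Prop) [DecidablePred p]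
    {f : α → ℝ} {lo hi : ℝ} (hf : ∀ a, f a ∈ Set.Icc lo hi) :
    expect Q f ∈ Set.Icc
      (expect Q (fun a => if p a then f a else 0) + lo * (1 - pr Q {a | p a}))
      (expect Q (fun a => if p a then f a else 0) + hi * (1 - pr Q {a | p a})) := by
  have hsplit : expect Q f = expect Q (fun a => if p a then f a else 0)
      + ∑ a, Q.mass a * (if p a then 0 else f a) := by
    rw [_root_.expect, _root_.expect, ← Finset.sum_add_distrib]
    exact Finset.sum_congr rfl fun a _ => by split_ifs <;> ring
  have hcompl : ∀ c : ℝ, c * (1 - pr Q {a | p a}) = ∑ a, Q.mass a * (if p a then 0 else c) := by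
    intro c
    rw [pr_eq_sum_ite, ← Q.total, ← Finset.sum_sub_distrib, Finset.mul_sum]
    exact Finset.sum_congr rfl fun a _ => by split_ifs <;> ring
  rw [hsplit, hcompl, hcompl]
  constructor <;> gcongr with a
  · exact Q.nonneg a
  · split_ifs
    exacts [le_rfl, (hf a).1]
  · exact Q.nonneg a
  · split_ifs
    exacts [le_rfl, (hf a).2]

end Expectation

section Latent

variable {Q : ProbMass (Latent 𝒴 D Z)} {P : ProbMass (Obs 𝒴 D Z)}

lemma Exog.mass_eq (hE : Exog Q) (yd : D → ↥𝒴) (dz : Z → D) (z : Z) :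
    Q.mass (yd, dz, z) = pr Q {ω | ω.1 = yd ∧ ω.2.1 = dz} * pr Q {ω | ω.2.2 = z} := by
  rw [← pr_singleton, ← hE]
  congr 1
  ext ω
  simp [Prod.ext_iff]

lemma Exog.expect_ite_instrument (hE : Exog Q) (g : (D → ↥𝒴) → (Z → D) → ℝ) (z : Z) :
    (expect Q fun ω => if ω.2.2 = z then g ω.1 ω.2.1 else 0)
      = pr Q {ω | ω.2.2 = z} * expect Q fun ω => g ω.1 ω.2.1 := by
  calc (expect Q fun ω => if ω.2.2 = z then g ω.1 ω.2.1 else 0)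
      = ∑ yd, ∑ dz, Q.mass (yd, dz, z) * g yd dz := by
        simp [_root_.expect, Fintype.sum_prod_type]
    _ = pr Q {ω | ω.2.2 = z} * ∑ x : (D → ↥𝒴) × (Z → D),
          pr Q {ω | (ω.1, ω.2.1) = x} * g x.1 x.2 := by
        simp only [hE.mass_eq, Fintype.sum_prod_type, Finset.mul_sum, Prod.ext_iff]
        exact Finset.sum_congr rfl fun _ _ => Finset.sum_congr rfl fun _ _ => by ring
    _ = pr Q {ω | ω.2.2 = z} * expect Q fun ω => g ω.1 ω.2.1 := by
        rw [← expect_comp Q (fun ω => (ω.1, ω.2.1)) fun x => g x.1 x.2]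
        rfl

lemma Rationalizes.prZ_eq (hR : Rationalizes Q P) (z : Z) :
    prZ P z = pr Q {ω | ω.2.2 = z} := by
  rw [prZ, pr_eq_expect, pr_eq_expect, expect_eq_expect_comp hR]
  rfl

lemma Rationalizes.expect_ite_eq_prZ_mul (hR : Rationalizes Q P) (hE : Exog Q) (d : D) (z : Z)
    (f : ↥𝒴 → ℝ) :
    (expect P fun o => if o.2.1 = d ∧ o.2.2 = z then f o.1 else 0)
      = prZ P z * expect Q fun ω => if ω.2.1 z = d then f (ω.1 d) else 0 := by
  rw [expect_eq_expect_comp hR, hR.prZ_eq,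
    ← hE.expect_ite_instrument (fun yd dz => if dz z = d then f (yd d) else 0)]
  congr 1
  funext ⟨yd, dz, z'⟩
  by_cases hz : z' = z <;> by_cases hd : dz z = d <;> simp [Tmap, hz, hd]

lemma Rationalizes.betaObs_eq (hR : Rationalizes Q P) (hE : Exog Q) {z : Z} (hz : prZ P z ≠ 0)
    (d : D) : betaObs P d z = expect Q fun ω => if ω.2.1 z = d then (ω.1 d : ℝ) else 0 := by
  rw [betaObs, hR.expect_ite_eq_prZ_mul hE d z (↑), mul_div_cancel_left₀ _ hz]

lemma Rationalizes.sum_pObs_eq (hR : Rationalizes Q P) (hE : Exog Q) {z : Z} (hz : prZ P z ≠ 0)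
    (d : D) : ∑ y ∈ 𝒴, pObs P y d z = pr Q {ω | ω.2.1 z = d} := by
  simp only [pObs]
  rw [← Finset.sum_div, sum_pr_eq_and_eq_pr P (fun o => o.1.2), pr_eq_expect,
    hR.expect_ite_eq_prZ_mul hE d z fun _ => 1, mul_div_cancel_left₀ _ hz, pr_eq_expect]

end Latent

/-- validity of the bounds: if `Q` satisfies instrument exogeneity and
generalized monotonicity with maximally encouraging values `z*(d)` and rationalizes `P`, then
`E_Q[Y_d]` lies in the interval
`[β_{d|z*(d)} + y^L(1 − Σ_y p_{yd|z*(d)}), β_{d|z*(d)} + y^U(1 − Σ_y p_{yd|z*(d)})]`. -/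
theorem avg_potential_outcome_in_bounds
    (𝒴 : Finset ℝ) (h𝒴 : 2 ≤ 𝒴.card)
    (D Z : Type) [Fintype D] [DecidableEq D]
    [Fintype Z] [DecidableEq Z]
    (Q : ProbMass (Latent 𝒴 D Z)) (P : ProbMass (Obs 𝒴 D Z))
    (hE : Exog Q)
    (zstar : D → Z)
    (hR : Rationalizes Q P)
    (hP : ∀ z : Z, 0 < prZ P z) :
    ∀ d : D, theta Q d ∈ Set.Icc
      (betaObs P d (zstar d)
        + 𝒴.min' (Finset.card_pos.mp (by omega)) * (1 - ∑ y ∈ 𝒴, pObs P y d (zstar d)))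
      (betaObs P d (zstar d)
        + 𝒴.max' (Finset.card_pos.mp (by omega)) * (1 - ∑ y ∈ 𝒴, pObs P y d (zstar d))) := by
  intro d
  rw [hR.betaObs_eq hE (hP _).ne', hR.sum_pObs_eq hE (hP _).ne']
  exact expect_mem_Icc_of_mem_Icc Q (fun ω => ω.2.1 (zstar d) = d)
    fun ω => ⟨Finset.min'_le _ _ (ω.1 d).2, Finset.le_max' _ _ (ω.1 d).2⟩
end
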